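/- If X is a finite connected groupoid (a symmetric set with X_1 finite, connected, for which 𝓔_T : X_n → lim_T X is a bijection for every n ≥ 1 and every spine T of [n]), then X has dimension p(X). -/

import Mathlib

/-- A symmetric (simplicial) set: a functor `Υᵒᵖ → Set`, where `Υ` has objects
`[n] = {0,…,n}` (encoded as `Fin (n+1)`) and all functions as morphisms.
For `α : [m] → [n]` and `x ∈ X_n`, `act α x` is `x · α ∈ X_m`. -/
structure SymSet where
  obj : ℕ → Type
  act : ∀ {m n : ℕ}, (Fin (m + 1) → Fin (n + 1)) → obj n → obj m
  act_id : ∀ {n : ℕ} (x : obj n), act id x = x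
  act_comp : ∀ {m n k : ℕ} (α : Fin (m + 1) → Fin (n + 1)) (β : Fin (n + 1) → Fin (k + 1))
      (x : obj k), act α (act β x) = act (β ∘ α) x

namespace SymSet

/-- `x_{ij} ∈ X_1`, the action on `x ∈ X_n` of the map `[1] → [n]` with `0 ↦ i`, `1 ↦ j`. -/
def edge (X : SymSet) {n : ℕ} (i j : Fin (n + 1)) (x : X.obj n) : X.obj 1 :=
  X.act (fun t : Fin 2 => if t = 0 then i else j) x

/-- The domain of an edge, its image under `ι₀ : [0] → [1]`, `0 ↦ 0`. -/
def edgeDom (X : SymSet) (f : X.obj 1) : X.obj 0 :=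
  X.act (fun _ : Fin 1 => (0 : Fin 2)) f

/-- The codomain of an edge, its image under `ι₁ : [0] → [1]`, `0 ↦ 1`. -/
def edgeCod (X : SymSet) (f : X.obj 1) : X.obj 0 :=
  X.act (fun _ : Fin 1 => (1 : Fin 2)) f

/-- The identity edge `id_a` on an object `a ∈ X_0`, induced by the unique map `[1] → [0]`. -/
def identityEdge (X : SymSet) (a : X.obj 0) : X.obj 1 :=
  X.act (fun _ : Fin 2 => (0 : Fin 1)) a

/-- An edge is an identity if it is in the image of `X_0 → X_1`. -/
def IsIdentityEdge (X : SymSet) (f : X.obj 1) : Prop :=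
  ∃ a : X.obj 0, f = X.identityEdge a

/-- The tuple of edges `x_{ij}` (for `i < j` an edge `{i,j}` of the spine `T`)
associated to an `n`-simplex `x`. -/
def spineTuple (X : SymSet) {n : ℕ} (T : SimpleGraph (Fin (n + 1))) (x : X.obj n) :
    ∀ i j : Fin (n + 1), i < j → T.Adj i j → X.obj 1 :=
  fun i j _ _ => X.edge i j x

/-- Membership in `lim_T X`: the components have matching endpoints. -/
def IsSpineLim (X : SymSet) {n : ℕ} (T : SimpleGraph (Fin (n + 1)))
    (e : ∀ i j : Fin (n + 1), i < j → T.Adj i j → X.obj 1) : Prop :=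
  ∃ v : Fin (n + 1) → X.obj 0, ∀ (i j : Fin (n + 1)) (hlt : i < j) (h : T.Adj i j),
    X.edgeDom (e i j hlt h) = v i ∧ X.edgeCod (e i j hlt h) = v j

/-- The limit `lim_T X` of the diagram associated to a spine `T`. -/
def SpineLim (X : SymSet) {n : ℕ} (T : SimpleGraph (Fin (n + 1))) : Type :=
  { e : ∀ i j : Fin (n + 1), i < j → T.Adj i j → X.obj 1 // X.IsSpineLim T e }

lemma spineTuple_isSpineLim (X : SymSet) {n : ℕ} (T : SimpleGraph (Fin (n + 1)))
    (x : X.obj n) : X.IsSpineLim T (X.spineTuple T x) := by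
  refine ⟨fun i => X.act (fun _ : Fin 1 => i) x, fun i j hlt h => ⟨?_, ?_⟩⟩
  · show X.act _ (X.act _ x) = _
    rw [X.act_comp]
    show X.act ((fun t : Fin 2 => if t = 0 then i else j) ∘ fun _ : Fin 1 => 0) x
      = X.act (fun _ : Fin 1 => i) x
    congr 1
  · show X.act _ (X.act _ x) = _
    rw [X.act_comp]
    show X.act ((fun t : Fin 2 => if t = 0 then i else j) ∘ fun _ : Fin 1 => 1) x
      = X.act (fun _ : Fin 1 => j) x
    congr 1

/-- The map `𝓔_T : X_n → lim_T X`. -/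
def spineMap (X : SymSet) {n : ℕ} (T : SimpleGraph (Fin (n + 1))) (x : X.obj n) :
    X.SpineLim T :=
  ⟨X.spineTuple T x, X.spineTuple_isSpineLim T x⟩

/-- A symmetric set is *spiny* if `𝓔_T` is injective for every `n ≥ 1` and
every spine `T` of `[n]` (a tree with vertex set `[n]`). -/
def Spiny (X : SymSet) : Prop :=
  ∀ n : ℕ, 1 ≤ n → ∀ T : SimpleGraph (Fin (n + 1)), T.IsTree →
    Function.Injective (X.spineMap T)

/-- An element `x ∈ X_n` is degenerate if `x = y · σ` for some noninvertible
surjection `σ : [n] → [k]`. -/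
def Degenerate (X : SymSet) {n : ℕ} (x : X.obj n) : Prop :=
  ∃ (k : ℕ) (σ : Fin (n + 1) → Fin (k + 1)) (y : X.obj k),
    Function.Surjective σ ∧ ¬ Function.Bijective σ ∧ x = X.act σ y

/-- A symmetric subset (subfunctor) of `X`. -/
structure SymSubset (X : SymSet) where
  carrier : ∀ n : ℕ, Set (X.obj n)
  act_mem : ∀ {m n : ℕ} (α : Fin (m + 1) → Fin (n + 1)) {x : X.obj n},
    x ∈ carrier n → X.act α x ∈ carrier m

/-- `X` is `n`-skeletal: the smallest symmetric subset of `X` containing all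
of its `n`-simplices is all of `X`. -/
def IsSkeletal (X : SymSet) (n : ℕ) : Prop :=
  ∀ Y : SymSubset X, (∀ x : X.obj n, x ∈ Y.carrier n) →
    ∀ (m : ℕ) (x : X.obj m), x ∈ Y.carrier m

/-- `X` has dimension `n`: it is `n`-skeletal but not `k`-skeletal for `k < n`
(for `n ≥ 1` this is equivalent to not being `(n-1)`-skeletal). -/
def HasDim (X : SymSet) (n : ℕ) : Prop :=
  X.IsSkeletal n ∧ ∀ k : ℕ, k < n → ¬ X.IsSkeletal k

/-- Two objects are related if there is an edge between them (in either direction). -/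
def EdgeRel (X : SymSet) (a b : X.obj 0) : Prop :=
  ∃ f : X.obj 1, (X.edgeDom f = a ∧ X.edgeCod f = b) ∨ (X.edgeDom f = b ∧ X.edgeCod f = a)

/-- `X` is connected: it is nonempty and any two objects are joined by a
zig-zag of edges. -/
def Connected (X : SymSet) : Prop :=
  Nonempty (X.obj 0) ∧ ∀ a b : X.obj 0, Relation.ReflTransGen X.EdgeRel a b

/-- `n_a`: the number of nonidentity edges with domain `a`. -/
noncomputable def nEdges (X : SymSet) (a : X.obj 0) : ℕ :=
  Nat.card { f : X.obj 1 // X.edgeDom f = a ∧ ¬ X.IsIdentityEdge f }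

/-- `p(X)`: the maximum of the `n_a` over all objects `a`. -/
noncomputable def pVal (X : SymSet) : ℕ := ⨆ a : X.obj 0, X.nEdges a

/-- A map of symmetric sets (a natural transformation). -/
structure SymMap (X Y : SymSet) where
  app : ∀ n : ℕ, X.obj n → Y.obj n
  naturality : ∀ {m n : ℕ} (α : Fin (m + 1) → Fin (n + 1)) (x : X.obj n),
    app m (X.act α x) = Y.act α (app n x)

/-- A map of symmetric sets is an isomorphism iff it is levelwise bijective. -/
def SymMap.IsIso {X Y : SymSet} (F : SymMap X Y) : Prop :=
  ∀ n : ℕ, Function.Bijective (F.app n)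

/-- `X` and `Y` are isomorphic symmetric sets. -/
def Isomorphic (X Y : SymSet) : Prop := ∃ F : SymMap X Y, F.IsIso

/-- The Bousfield–Segal map `𝓑_m : X_m → X_1^m`, `x ↦ (x_{01}, x_{02}, …, x_{0m})`. -/
def bousfield (X : SymSet) {m : ℕ} (x : X.obj m) : Fin m → X.obj 1 :=
  fun i => X.edge 0 i.succ x

/-- `X` is spiny in degrees below `q`: `𝓔_T` is injective for every spine `T`
of `[n]` for each `1 ≤ n ≤ q`. -/
def SpinyBelow (X : SymSet) (q : ℕ) : Prop :=
  ∀ n : ℕ, 1 ≤ n → n ≤ q → ∀ T : SimpleGraph (Fin (n + 1)), T.IsTree →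
    Function.Injective (X.spineMap T)

/-- `X` is a groupoid: `𝓔_T : X_n → lim_T X` is a bijection for every `n ≥ 1`
and every spine `T` of `[n]`. -/
def IsGroupoid (X : SymSet) : Prop :=
  ∀ n : ℕ, 1 ≤ n → ∀ T : SimpleGraph (Fin (n + 1)), T.IsTree →
    Function.Bijective (X.spineMap T)

/-- `X` is reduced: `X_0` is a singleton. -/
def Reduced (X : SymSet) : Prop := Nonempty (X.obj 0) ∧ Subsingleton (X.obj 0)

/-- A partial group is a reduced spiny symmetric set. -/
def IsPartialGroup (X : SymSet) : Prop := X.Reduced ∧ X.Spiny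

/-- The levelwise product of two symmetric sets. -/
def prod (X Y : SymSet) : SymSet where
  obj n := X.obj n × Y.obj n
  act α p := (X.act α p.1, Y.act α p.2)
  act_id p := by cases p with | mk a b => simp only [X.act_id, Y.act_id]
  act_comp α β p := by cases p with | mk a b => simp only [X.act_comp, Y.act_comp]

end SymSet

/-!
In a spiny symmetric set an edge `x_{ij}` of a simplex `x` is an identity exactly when
`x_{ki} = x_{kj}` for some vertex `k`, and then merging `j` into `i` does not change `x`,
so `x` comes from a simplex of one dimension less. A simplex without identity edges therefore has
pairwise distinct nonidentity edges `x_{01}, …, x_{0m}` out of `x_0`, whence `m ≤ p(X)`, and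
every simplex of higher dimension comes from one of dimension `p(X)`. Conversely, the star spine
at `0` assembles the nonidentity edges out of an object with `n_a = p(X)` into a `p(X)`-simplex
without identity edges; it does not come from a simplex of lower dimension `k`, since a map
`[p(X)] → [k]` identifies two vertices.
-/

namespace SymSet

section

variable (X : SymSet)

def vertex {n : ℕ} (i : Fin (n + 1)) (x : X.obj n) : X.obj 0 :=
  X.act (fun _ : Fin 1 => i) x

lemma edge_act {m n : ℕ} (σ : Fin (m + 1) → Fin (n + 1)) (u v : Fin (m + 1)) (x : X.obj n) :
    X.edge u v (X.act σ x) = X.edge (σ u) (σ v) x := by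
  rw [edge, edge, X.act_comp]
  congr 1
  funext t
  by_cases ht : t = 0 <;> simp [ht]

lemma edgeDom_edge {n : ℕ} (i j : Fin (n + 1)) (x : X.obj n) :
    X.edgeDom (X.edge i j x) = X.vertex i x := by
  rw [edgeDom, edge, X.act_comp]
  rfl

lemma edge_self {n : ℕ} (i : Fin (n + 1)) (x : X.obj n) :
    X.edge i i x = X.identityEdge (X.vertex i x) := by
  rw [identityEdge, vertex, X.act_comp, edge]
  congr 1
  funext t
  split_ifs <;> rfl

lemma act_eq_self_of_obj_zero (α : Fin 1 → Fin 1) (a : X.obj 0) : X.act α a = a := by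
  rw [Subsingleton.elim α id, X.act_id]

lemma edgeDom_identityEdge (a : X.obj 0) : X.edgeDom (X.identityEdge a) = a := by
  rw [edgeDom, identityEdge, X.act_comp, act_eq_self_of_obj_zero]

lemma edge_swap {n : ℕ} (i j : Fin (n + 1)) (x : X.obj n) :
    X.edge j i x = X.act (fun t : Fin 2 => if t = 0 then 1 else 0) (X.edge i j x) := by
  rw [edge, edge, X.act_comp]
  congr 1
  funext t
  fin_cases t <;> rfl

lemma isIdentityEdge_swap {n : ℕ} {i j : Fin (n + 1)} {x : X.obj n}
    (h : X.IsIdentityEdge (X.edge i j x)) : X.IsIdentityEdge (X.edge j i x) := by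
  obtain ⟨a, ha⟩ := h
  refine ⟨a, ?_⟩
  rw [X.edge_swap, ha, identityEdge, X.act_comp]
  rfl

lemma edge_eq_edge_self_of_isIdentityEdge {n : ℕ} {i j : Fin (n + 1)} {x : X.obj n}
    (h : X.IsIdentityEdge (X.edge i j x)) : X.edge i j x = X.edge i i x := by
  obtain ⟨a, ha⟩ := h
  have hva : X.vertex i x = a := by rw [← X.edgeDom_edge i j x, ha, X.edgeDom_identityEdge]
  rw [ha, X.edge_self, hva]

end

variable {X : SymSet}

lemma IsGroupoid.spiny (hX : X.IsGroupoid) : X.Spiny :=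
  fun n hn T hT => (hX n hn T hT).1

/-- The edges out of `c` are the spine tuple of the star at `c`. -/
lemma Spiny.ext (hs : X.Spiny) {n : ℕ} {x y : X.obj n} (c : Fin (n + 1))
    (h : ∀ v, X.edge c v x = X.edge c v y) : x = y := by
  rcases n with _ | n
  · have hc := congrArg X.edgeDom (h c)
    rwa [X.edgeDom_edge, X.edgeDom_edge, vertex, vertex, X.act_eq_self_of_obj_zero,
      X.act_eq_self_of_obj_zero] at hc
  refine hs (n + 1) (by omega) _ (SimpleGraph.isTree_starGraph c) (Subtype.ext ?_)
  funext u v _ huv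
  change X.edge u v x = X.edge u v y
  rcases (SimpleGraph.starGraph_adj.mp huv).2 with rfl | rfl
  · exact h v
  · rw [X.edge_swap v u x, X.edge_swap v u y, h u]

lemma IsGroupoid.exists_edge_zero_succ_eq (hX : X.IsGroupoid) {n : ℕ} (a : X.obj 0)
    (f : Fin n → X.obj 1) (hf : ∀ t, X.edgeDom (f t) = a) :
    ∃ x : X.obj n, ∀ t, X.edge 0 t.succ x = f t := by
  rcases n with _ | n
  · exact ⟨a, fun t => t.elim0⟩
  let e : ∀ u v : Fin (n + 2), u < v → (SimpleGraph.starGraph 0).Adj u v → X.obj 1 :=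
    fun _ v huv _ => f (v.pred (Fin.ne_zero_of_lt huv))
  have he : X.IsSpineLim _ e := by
    refine ⟨fun v => if hv : v = 0 then a else X.edgeCod (f (v.pred hv)), fun u v huv hadj => ?_⟩
    obtain rfl : u = 0 := (SimpleGraph.starGraph_adj.mp hadj).2.resolve_right
      (Fin.ne_zero_of_lt huv)
    simp [e, hf, Fin.ne_zero_of_lt huv]
  obtain ⟨x, hx⟩ := (hX (n + 1) (by omega) _ (SimpleGraph.isTree_starGraph 0)).2 ⟨e, he⟩
  refine ⟨x, fun t => ?_⟩
  have := congrFun (congrFun (congrFun (congrFun (congrArg Subtype.val hx) 0) t.succ)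
    t.succ_pos) (SimpleGraph.starGraph_center_adj (Fin.succ_ne_zero t).symm)
  simpa [spineMap, spineTuple, e] using this

def NoIdentityEdges {n : ℕ} (x : X.obj n) : Prop :=
  ∀ i j : Fin (n + 1), i ≠ j → ¬ X.IsIdentityEdge (X.edge i j x)

namespace Spiny

variable {n : ℕ} {x : X.obj n} {i j : Fin (n + 1)}

lemma act_update_id_of_isIdentityEdge (hs : X.Spiny) (hid : X.IsIdentityEdge (X.edge i j x)) :
    X.act (Function.update id j i) x = x := by
  refine hs.ext i fun v => ?_
  have hi : Function.update id j i i = i := by by_cases h : i = j <;> simp [h]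
  rw [X.edge_act, hi]
  by_cases hv : v = j
  · subst hv
    rw [Function.update_self, ← X.edge_eq_edge_self_of_isIdentityEdge hid]
  · rw [Function.update_of_ne hv, id]

lemma edge_eq_of_isIdentityEdge (hs : X.Spiny) (hid : X.IsIdentityEdge (X.edge i j x))
    {k : Fin (n + 1)} (hk : k ≠ j) : X.edge k j x = X.edge k i x := by
  conv_lhs => rw [← hs.act_update_id_of_isIdentityEdge hid]
  rw [X.edge_act, Function.update_of_ne hk, Function.update_self, id]

lemma isIdentityEdge_of_edge_eq (hs : X.Spiny) {k : Fin (n + 1)}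
    (h : X.edge k i x = X.edge k j x) : X.IsIdentityEdge (X.edge i j x) := by
  have hρ : X.act ![k, i, j] x = X.act ![k, i, i] x := by
    refine hs.ext 0 fun v => ?_
    rw [X.edge_act, X.edge_act]
    fin_cases v
    exacts [rfl, rfl, h.symm]
  have h12 := congrArg (X.edge 1 2) hρ
  rw [X.edge_act, X.edge_act] at h12
  exact ⟨_, h12.trans (X.edge_self _ _)⟩

lemma noIdentityEdges_iff_injective (hs : X.Spiny) (k : Fin (n + 1)) :
    X.NoIdentityEdges x ↔ Function.Injective fun v => X.edge k v x := by
  refine ⟨fun hx v w hvw => by_contra fun hne => hx v w hne (hs.isIdentityEdge_of_edge_eq hvw),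
    fun hinj v w hne hid => hne ?_⟩
  by_cases hw : w = k
  · subst hw
    exact hinj (hs.edge_eq_of_isIdentityEdge (X.isIdentityEdge_swap hid) hne.symm)
  · exact (hinj (hs.edge_eq_of_isIdentityEdge hid (Ne.symm hw))).symm

end Spiny

def skeleton (X : SymSet) (k : ℕ) : SymSubset X where
  carrier m := {x | ∃ (α : Fin (m + 1) → Fin (k + 1)) (y : X.obj k), x = X.act α y}
  act_mem α := by
    rintro x ⟨β, y, rfl⟩
    exact ⟨β ∘ α, y, X.act_comp α β y⟩

lemma isSkeletal_iff (k : ℕ) :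
    X.IsSkeletal k ↔ ∀ m (x : X.obj m), x ∈ (X.skeleton k).carrier m := by
  refine ⟨fun h => h _ fun y => ⟨id, y, (X.act_id y).symm⟩, fun h Y hY m x => ?_⟩
  obtain ⟨α, y, rfl⟩ := h m x
  exact Y.act_mem α (hY y)

lemma mem_skeleton_of_le {k m : ℕ} (hm : m ≤ k) (x : X.obj m) :
    x ∈ (X.skeleton k).carrier m := by
  refine ⟨Fin.castLE (by omega), X.act (fun t => ⟨min t m, by omega⟩) x, ?_⟩
  rw [X.act_comp]
  convert (X.act_id x).symm
  funext t
  ext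
  simp [Nat.min_eq_left (Nat.le_of_lt_succ t.isLt)]

lemma Spiny.exists_act_eq_of_isIdentityEdge (hs : X.Spiny) {m : ℕ} {x : X.obj (m + 1)}
    {i j : Fin (m + 2)} (hij : i ≠ j) (hid : X.IsIdentityEdge (X.edge i j x)) :
    ∃ (π : Fin (m + 2) → Fin (m + 1)) (z : X.obj m), x = X.act π z := by
  have hne : ∀ k, Function.update id j i k ≠ j := by
    intro k
    by_cases hk : k = j
    · rwa [hk, Function.update_self]
    · rwa [Function.update_of_ne hk]
  choose π hπ using fun k => Fin.exists_succAbove_eq (hne k)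
  refine ⟨π, X.act j.succAbove x, ?_⟩
  rw [X.act_comp, show j.succAbove ∘ π = Function.update id j i from funext hπ,
    hs.act_update_id_of_isIdentityEdge hid]

lemma Spiny.isSkeletal_of_forall_le (hs : X.Spiny) {k : ℕ}
    (h : ∀ m (x : X.obj m), X.NoIdentityEdges x → m ≤ k) : X.IsSkeletal k := by
  rw [isSkeletal_iff]
  intro m
  induction m using Nat.strong_induction_on with
  | _ m ih =>
    intro x
    by_cases hm : m ≤ k
    · exact mem_skeleton_of_le hm x
    have hx : ¬ X.NoIdentityEdges x := fun hx => hm (h m x hx)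
    simp only [NoIdentityEdges, not_forall, not_not] at hx
    obtain ⟨i, j, hij, hid⟩ := hx
    obtain _ | m := m
    · exact absurd (Subsingleton.elim (α := Fin 1) i j) hij
    obtain ⟨π, z, rfl⟩ := hs.exists_act_eq_of_isIdentityEdge hij hid
    exact (X.skeleton k).act_mem π (ih m (by omega) z)

lemma NoIdentityEdges.not_isSkeletal {n k : ℕ} {x : X.obj n} (hx : X.NoIdentityEdges x)
    (hk : k < n) : ¬ X.IsSkeletal k := by
  rw [isSkeletal_iff]
  intro h
  obtain ⟨α, y, rfl⟩ := h n x
  obtain ⟨i, j, hij, hα⟩ := Fintype.exists_ne_map_eq_of_card_lt α (by simpa using hk)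
  exact hx i j hij ⟨_, by rw [X.edge_act, hα, X.edge_self]⟩

lemma bddAbove_range_nEdges [Finite (X.obj 1)] : BddAbove (Set.range X.nEdges) :=
  ⟨Nat.card (X.obj 1), by
    rintro _ ⟨a, rfl⟩
    exact Nat.card_le_card_of_injective _ Subtype.val_injective⟩

lemma exists_nEdges_eq_pVal [Finite (X.obj 1)] (hp : 0 < X.pVal) : ∃ a, X.nEdges a = X.pVal := by
  have : Nonempty (X.obj 0) := by
    by_contra h
    rw [not_nonempty_iff] at h
    exact hp.ne' (ciSup_of_empty _)
  exact Nat.sSup_mem (Set.range_nonempty _) bddAbove_range_nEdges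

lemma Spiny.le_pVal_of_noIdentityEdges (hs : X.Spiny) [Finite (X.obj 1)] {m : ℕ} {x : X.obj m}
    (hx : X.NoIdentityEdges x) : m ≤ X.pVal := by
  let g : Fin m → {f // X.edgeDom f = X.vertex 0 x ∧ ¬ X.IsIdentityEdge f} :=
    fun t => ⟨X.edge 0 t.succ x, X.edgeDom_edge _ _ x, hx _ _ (Fin.succ_ne_zero t).symm⟩
  have hg : Function.Injective g := fun s t hst =>
    Fin.succ_injective _ ((hs.noIdentityEdges_iff_injective 0).mp hx (congrArg Subtype.val hst))
  calc m = Nat.card (Fin m) := (Nat.card_fin m).symm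
    _ ≤ X.nEdges (X.vertex 0 x) := Nat.card_le_card_of_injective g hg
    _ ≤ X.pVal := le_ciSup bddAbove_range_nEdges _

/-- The star spine at `0` turns the `n_a` nonidentity edges out of `a` into an `n_a`-simplex. -/
lemma IsGroupoid.exists_noIdentityEdges (hX : X.IsGroupoid) [Finite (X.obj 1)] (a : X.obj 0) :
    ∃ x : X.obj (X.nEdges a), X.NoIdentityEdges x := by
  let e : Fin (X.nEdges a) ≃ {f // X.edgeDom f = a ∧ ¬ X.IsIdentityEdge f} :=
    (Finite.equivFin _).symm
  obtain ⟨x, hx⟩ := hX.exists_edge_zero_succ_eq a (fun t => (e t).1) fun t => (e t).2.1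
  refine ⟨x, (hX.spiny.noIdentityEdges_iff_injective 0).mpr fun v w hvw => ?_⟩
  have h0 : ∀ t : Fin (X.nEdges a), X.edge 0 0 x ≠ X.edge 0 t.succ x := fun t h =>
    (e t).2.2 (hx t ▸ h ▸ ⟨_, X.edge_self 0 x⟩)
  cases v using Fin.cases <;> cases w using Fin.cases
  · rfl
  · exact absurd hvw (h0 _)
  · exact absurd hvw.symm (h0 _)
  · simp only [hx] at hvw
    rw [e.injective (Subtype.val_injective hvw)]

end SymSet

theorem stmt8_general (X : SymSet) (hX : X.IsGroupoid) (hfin : Finite (X.obj 1)) :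
    X.HasDim X.pVal := by
  refine ⟨hX.spiny.isSkeletal_of_forall_le fun _ _ => hX.spiny.le_pVal_of_noIdentityEdges,
    fun k hk => ?_⟩
  obtain ⟨a, ha⟩ := X.exists_nEdges_eq_pVal (by omega)
  obtain ⟨x, hx⟩ := hX.exists_noIdentityEdges a
  exact hx.not_isSkeletal (ha ▸ hk)

/-- a finite connected groupoid has dimension `p(X)`. -/
theorem stmt8 (X : SymSet) (hX : X.IsGroupoid) (hfin : Finite (X.obj 1))
    (hconn : X.Connected) : X.HasDim X.pVal :=
  stmt8_general X hX hfin
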